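/- For all d ∈ D□ and δL, δR ∈ D□*, the infinite tape specification and the tape controller composed with the (infinite) queue are divergence-preserving branching bisimilar: T_{E∞T}(T_{δL ď δR}) ≈Δb T_{ET ∪ E∞Q}([H_d ∥ Q_{δR ⊥ δL}]_{{i,o}}). -/

import Mathlib

namespace RTMPaper

/-! ## Labelled transition systems

An `A`-labelled transition system; transition labels are drawn from `Option A`,
where `none` plays the role of the unobservable action τ. -/

structure LTS (A : Type) where
  State : Type
  tr : State → Option A → State → Prop
  init : State
  final : Set State

namespace LTS

variable {A : Type}

/-- A τ-step. -/
def tauStep (T : LTS A) (s t : T.State) : Prop := T.tr s none t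

/-- `⇒` : the reflexive–transitive closure of τ-steps. -/
def tauReach (T : LTS A) : T.State → T.State → Prop :=
  Relation.ReflTransGen T.tauStep

/-- `s —(a)→ t` : either `s —a→ t`, or `a = τ` and `s = t`. -/
def optStep (T : LTS A) (s : T.State) (a : Option A) (t : T.State) : Prop :=
  T.tr s a t ∨ (a = none ∧ s = t)

/-- The set of outgoing transitions of a state. -/
def out (T : LTS A) (s : T.State) : Set (Option A × T.State) :=
  {p | T.tr s p.1 p.2}

def FinitelyBranching (T : LTS A) : Prop := ∀ s, (T.out s).Finite

/-- The branching degree of `T` is bounded by `B`. -/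
def BranchingDegreeBoundedBy (T : LTS A) (B : ℕ) : Prop :=
  ∀ s, (T.out s).Finite ∧ (T.out s).ncard ≤ B

def BoundedlyBranching (T : LTS A) : Prop := ∃ B, T.BranchingDegreeBoundedBy B

/-- A deterministic transition system. -/
def Deterministic (T : LTS A) : Prop :=
  (∀ s a t₁ t₂, T.tr s a t₁ → T.tr s a t₂ → t₁ = t₂) ∧
  (∀ s t, T.tr s none t → ∀ a u, T.tr s a u → a = none)

/-- Relabelling of an LTS along a map of action alphabets (τ is mapped to τ). -/
def relabel {A' : Type} (f : A → A') (T : LTS A) : LTS A' where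
  State := T.State
  tr s a t := ∃ a₀ : Option A, T.tr s a₀ t ∧ a = Option.map f a₀
  init := T.init
  final := T.final

end LTS

/-! ## (Divergence-preserving) branching bisimilarity -/

structure IsBranchingBisimulation {A : Type} (T₁ T₂ : LTS A)
    (R : T₁.State → T₂.State → Prop) : Prop where
  fwd : ∀ s₁ s₂ a s₁', R s₁ s₂ → T₁.tr s₁ a s₁' →
    ∃ s₂'' s₂', T₂.tauReach s₂ s₂'' ∧ T₂.optStep s₂'' a s₂' ∧ R s₁ s₂'' ∧ R s₁' s₂'
  bwd : ∀ s₁ s₂ a s₂', R s₁ s₂ → T₂.tr s₂ a s₂' →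
    ∃ s₁'' s₁', T₁.tauReach s₁ s₁'' ∧ T₁.optStep s₁'' a s₁' ∧ R s₁'' s₂ ∧ R s₁' s₂'
  finFwd : ∀ s₁ s₂, R s₁ s₂ → s₁ ∈ T₁.final →
    ∃ s₂', T₂.tauReach s₂ s₂' ∧ R s₁ s₂' ∧ s₂' ∈ T₂.final
  finBwd : ∀ s₁ s₂, R s₁ s₂ → s₂ ∈ T₂.final →
    ∃ s₁', T₁.tauReach s₁ s₁' ∧ R s₁' s₂ ∧ s₁' ∈ T₁.final

/-- The divergence-preservation conditions on a branching bisimulation. -/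
def DivergencePreserving {A : Type} (T₁ T₂ : LTS A)
    (R : T₁.State → T₂.State → Prop) : Prop :=
  (∀ (s₂ : T₂.State) (f : ℕ → T₁.State),
      (∀ i, T₁.tauStep (f i) (f (i + 1))) → (∀ i, R (f i) s₂) →
      ∃ s₂', Relation.TransGen T₂.tauStep s₂ s₂' ∧ ∃ i, R (f i) s₂') ∧
  (∀ (s₁ : T₁.State) (f : ℕ → T₂.State),
      (∀ i, T₂.tauStep (f i) (f (i + 1))) → (∀ i, R s₁ (f i)) →
      ∃ s₁', Relation.TransGen T₁.tauStep s₁ s₁' ∧ ∃ i, R s₁' (f i))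

/-- `T₁ ≈b T₂` : branching bisimilarity. -/
def BranchingBisimilar {A : Type} (T₁ T₂ : LTS A) : Prop :=
  ∃ R, IsBranchingBisimulation T₁ T₂ R ∧ R T₁.init T₂.init

/-- `T₁ ≈Δb T₂` : divergence-preserving branching bisimilarity. -/
def DPBranchingBisimilar {A : Type} (T₁ T₂ : LTS A) : Prop :=
  ∃ R, IsBranchingBisimulation T₁ T₂ R ∧ DivergencePreserving T₁ T₂ R ∧
    R T₁.init T₂.init

/-! ## Effective and computable transition systems -/

/-- A set of natural numbers is recursively enumerable. -/
def REset (X : Set ℕ) : Prop :=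
  ∃ f : ℕ →. Unit, Partrec f ∧ ∀ n, (f n).Dom ↔ n ∈ X

/-- A (finitely branching) LTS is computable if, with respect to some injective
codings of its labels and states into ℕ, the functions `out` and `fin` are
recursive. -/
def LTS.IsComputable {A : Type} (T : LTS A) : Prop :=
  ∃ hfb : ∀ s, (T.out s).Finite,
    ∃ (cL : Option A → ℕ) (cS : T.State → ℕ),
      Function.Injective cL ∧ Function.Injective cS ∧
      (∃ fo : ℕ → ℕ, Computable fo ∧ ∀ s,
        fo (cS s) =
          Encodable.encode
            (((hfb s).toFinset).image fun p => Nat.pair (cL p.1) (cS p.2))) ∧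
      (∃ ff : ℕ → ℕ, Computable ff ∧ ∀ s,
        (s ∈ T.final → ff (cS s) = 1) ∧ (s ∉ T.final → ff (cS s) = 0))

/-- A (finitely branching) LTS is effective if, with respect to some injective
codings of its labels and states into ℕ, its transition relation and its set of
final states are recursively enumerable. -/
def LTS.IsEffective {A : Type} (T : LTS A) : Prop :=
  T.FinitelyBranching ∧
  ∃ (cL : Option A → ℕ) (cS : T.State → ℕ),
    Function.Injective cL ∧ Function.Injective cS ∧
    REset {n | ∃ s a t, T.tr s a t ∧ n = Nat.pair (cS s) (Nat.pair (cL a) (cS t))} ∧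
    REset {n | ∃ s ∈ T.final, n = cS s}

/-! ## Reactive Turing machines -/

inductive Move : Type
  | L | R
deriving DecidableEq

instance : Fintype Move where
  elems := {Move.L, Move.R}
  complete := by intro x; cases x <;> simp

/-- A tape instance: the content left of the head (nearest symbol first), the
symbol under the head, and the content right of the head (nearest symbol
first).  Tape symbols are `Option D`, with `none` the blank symbol □. -/
structure Tape (D : Type) where
  left : List (Option D)
  head : Option D
  right : List (Option D)

def Tape.empty (D : Type) : Tape D := ⟨[], none, []⟩

/-- Write `e` at the head position and move the head in direction `m`. -/
def Tape.writeMove {D : Type} (t : Tape D) (e : Option D) : Move → Tape D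
  | .L =>
    match t.left with
    | [] => ⟨[], none, e :: t.right⟩
    | x :: l => ⟨l, x, e :: t.right⟩
  | .R =>
    match t.right with
    | [] => ⟨e :: t.left, none, []⟩
    | x :: r => ⟨e :: t.left, x, r⟩

/-- A reactive Turing machine with action symbols `A` (labels `Option A`,
`none` being τ) and data symbols `D` (tape symbols `Option D`, `none` being
the blank symbol). -/
structure RTM (A D : Type) where
  Q : Type
  [instQ : Fintype Q]
  trans : Q → Option D → Option A → Option D → Move → Q → Prop
  init : Q
  final : Set Q

attribute [instance] RTM.instQ

/-- The transition system `T(M)` associated with an RTM `M`. -/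
def RTM.lts {A D : Type} (M : RTM A D) : LTS A where
  State := M.Q × Tape D
  tr c a c' := ∃ e m, M.trans c.1 c.2.head a e m c'.1 ∧ c'.2 = c.2.writeMove e m
  init := (M.init, Tape.empty D)
  final := {c | c.1 ∈ M.final}

def RTM.Deterministic {A D : Type} (M : RTM A D) : Prop :=
  (∀ s d a e₁ m₁ t₁ e₂ m₂ t₂, M.trans s d a e₁ m₁ t₁ → M.trans s d a e₂ m₂ t₂ →
      e₁ = e₂ ∧ m₁ = m₂ ∧ t₁ = t₂) ∧
  (∀ s d e₁ m₁ t₁, M.trans s d none e₁ m₁ t₁ →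
      ∀ a e₂ m₂ t₂, M.trans s d a e₂ m₂ t₂ → a = none)

/-! ## Actions over channels, and parallel composition -/

/-- Actions over a set `C` of channels with communicated values in `V`,
together with further (base) actions from `B`:  `recv c v` is `c?v`,
`send c v` is `c!v`. -/
inductive CAct (C V B : Type) : Type
  | recv : C → V → CAct C V B
  | send : C → V → CAct C V B
  | base : B → CAct C V B
deriving DecidableEq

/-- The (possibly silent) action `a` is a communication action on one of the
channels in `C'`. -/
def IsComm {C V B : Type} (C' : Set C) : Option (CAct C V B) → Prop
  | some (.recv c _) => c ∈ C'
  | some (.send c _) => c ∈ C'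
  | _ => False

/-- Parallel composition `[T₁ ∥ T₂]_{C'}` of transition systems, enforcing
communication on the channels in `C'`. -/
def parLTS {C V B : Type} (C' : Set C) (T₁ T₂ : LTS (CAct C V B)) :
    LTS (CAct C V B) where
  State := T₁.State × T₂.State
  init := (T₁.init, T₂.init)
  final := {p | p.1 ∈ T₁.final ∧ p.2 ∈ T₂.final}
  tr p a p' :=
    ¬ IsComm C' a ∧
    ((T₁.tr p.1 a p'.1 ∧ p.2 = p'.2) ∨
     (T₂.tr p.2 a p'.2 ∧ p.1 = p'.1) ∨
     (a = none ∧ ∃ c ∈ C', ∃ d : V,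
        (T₁.tr p.1 (some (.send c d)) p'.1 ∧ T₂.tr p.2 (some (.recv c d)) p'.2) ∨
        (T₁.tr p.1 (some (.recv c d)) p'.1 ∧ T₂.tr p.2 (some (.send c d)) p'.2)))

/-- The behaviour of `sender(M)`: output the symbols of `w` one by one along
channel `cu`, then halt in a final state. -/
def outputLTS {C V B : Type} (cu : C) (w : List V) : LTS (CAct C V B) where
  State := List V
  tr s a t := ∃ d, s = d :: t ∧ a = some (.send cu d)
  init := w
  final := {([] : List V)}

/-- A concrete (syntactic, Gödel-numberable) presentation of a reactive Turing
machine: states are `Fin (n+1)`, and the transition relation is a finite set of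
tuples. -/
structure RTMc (A D : Type) where
  n : ℕ
  trans : Finset (Fin (n + 1) × Option D × Option A × Option D × Move × Fin (n + 1))
  init : Fin (n + 1)
  final : Finset (Fin (n + 1))

def RTMc.toRTM {A D : Type} (M : RTMc A D) : RTM A D where
  Q := Fin (M.n + 1)
  trans s d a e m t := (s, d, a, e, m, t) ∈ M.trans
  init := M.init
  final := (↑M.final : Set (Fin (M.n + 1)))

end RTMPaper

namespace RTMPaper

/-! ## A process calculus (TCP_τ without sequential composition) -/

/-- Process expressions: deadlock `0`, skip `1`, action prefix, alternative
composition, parallel composition (enforcing communication on a set of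
channels), and names. -/
inductive PExp (C V B N : Type) : Type
  | dl : PExp C V B N
  | emp : PExp C V B N
  | pref : Option (CAct C V B) → PExp C V B N → PExp C V B N
  | alt : PExp C V B N → PExp C V B N → PExp C V B N
  | par : Set C → PExp C V B N → PExp C V B N → PExp C V B N
  | name : N → PExp C V B N

namespace PExp

def names {C V B N : Type} : PExp C V B N → Set N
  | .dl => ∅
  | .emp => ∅
  | .pref _ p => p.names
  | .alt p q => p.names ∪ q.names
  | .par _ p q => p.names ∪ q.names
  | .name n => {n}

def mapNames {C V B N N' : Type} (f : N → N') : PExp C V B N → PExp C V B N'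
  | .dl => .dl
  | .emp => .emp
  | .pref a p => .pref a (p.mapNames f)
  | .alt p q => .alt (p.mapNames f) (q.mapNames f)
  | .par C' p q => .par C' (p.mapNames f) (q.mapNames f)
  | .name n => .name (f n)

end PExp

/-- A recursive specification over the names `N` is a partial map from names to
process expressions (the defining equations). -/
def SpecWF {C V B N : Type} (E : N → Option (PExp C V B N)) : Prop :=
  ∀ n p, E n = some p → ∀ m ∈ PExp.names p, (E m).isSome

/-- All names occurring in `p` have a defining equation in `E`. -/
def DefinedIn {C V B N : Type} (E : N → Option (PExp C V B N))
    (p : PExp C V B N) : Prop :=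
  ∀ m ∈ PExp.names p, (E m).isSome

/-- The termination predicate `↓` of the structural operational semantics. -/
inductive Term {C V B N : Type} (E : N → Option (PExp C V B N)) :
    PExp C V B N → Prop
  | emp : Term E .emp
  | altL {p q} : Term E p → Term E (.alt p q)
  | altR {p q} : Term E q → Term E (.alt p q)
  | par {C' p q} : Term E p → Term E q → Term E (.par C' p q)
  | name {n p} : E n = some p → Term E p → Term E (.name n)

/-- The transition relation of the structural operational semantics. -/
inductive Step {C V B N : Type} (E : N → Option (PExp C V B N)) :
    PExp C V B N → Option (CAct C V B) → PExp C V B N → Prop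
  | pref {a p} : Step E (.pref a p) a p
  | altL {p q a p'} : Step E p a p' → Step E (.alt p q) a p'
  | altR {p q a q'} : Step E q a q' → Step E (.alt p q) a q'
  | parL {C' p q a p'} : Step E p a p' → ¬ IsComm C' a →
      Step E (.par C' p q) a (.par C' p' q)
  | parR {C' p q a q'} : Step E q a q' → ¬ IsComm C' a →
      Step E (.par C' p q) a (.par C' p q')
  | syncSR {C' : Set C} {p q p' q' c d} : c ∈ C' →
      Step E p (some (.send c d)) p' → Step E q (some (.recv c d)) q' →
      Step E (.par C' p q) none (.par C' p' q')
  | syncRS {C' : Set C} {p q p' q' c d} : c ∈ C' →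
      Step E p (some (.recv c d)) p' → Step E q (some (.send c d)) q' →
      Step E (.par C' p q) none (.par C' p' q')
  | name {n p a p'} : E n = some p → Step E p a p' → Step E (.name n) a p'

/-- The process expressions reachable from `p` under the semantics of `E`. -/
def Reach {C V B N : Type} (E : N → Option (PExp C V B N))
    (p : PExp C V B N) : Set (PExp C V B N) :=
  {q | Relation.ReflTransGen (fun x y => ∃ a, Step E x a y) p q}

/-- The transition system `T_E(p)` associated with the process expression `p`
and the recursive specification `E`. -/
def pLTS {C V B N : Type} (E : N → Option (PExp C V B N))
    (p : PExp C V B N) : LTS (CAct C V B) where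
  State := {q // q ∈ Reach E p}
  tr s a t := Step E s.1 a t.1
  init := ⟨p, Relation.ReflTransGen.refl⟩
  final := {s | Term E s.1}

/-- A deterministic internal computation from `s` to `s'` with respect to a
transition relation `tr`. -/
def DetInternalComp {S A : Type} (tr : S → Option A → S → Prop)
    (s s' : S) : Prop :=
  ∃ (n : ℕ) (f : ℕ → S), f 0 = s ∧ f n = s' ∧
    (∀ i < n, tr (f i) none (f (i + 1))) ∧
    (∀ i < n, ∀ a u, tr (f i) a u → a = none ∧ u = f (i + 1))

/-! ### Finite sums of process expressions -/

def bigAlt {C V B N : Type} (l : List (PExp C V B N)) : PExp C V B N :=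
  l.foldr PExp.alt PExp.dl

/-- `Σ_{x ∈ l} f x`. -/
def sumList {C V B N ι : Type} (l : List ι) (f : ι → PExp C V B N) :
    PExp C V B N :=
  bigAlt (l.map f)

/-- The list of all elements of a finite type. -/
noncomputable def allOf (ι : Type) [Fintype ι] : List ι := Finset.univ.toList

/-- The disjoint union of two recursive specifications. -/
def combineSpec {C V B N₁ N₂ : Type}
    (E₁ : N₁ → Option (PExp C V B N₁)) (E₂ : N₂ → Option (PExp C V B N₂)) :
    N₁ ⊕ N₂ → Option (PExp C V B (N₁ ⊕ N₂))
  | .inl n => (E₁ n).map (PExp.mapNames Sum.inl)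
  | .inr n => (E₂ n).map (PExp.mapNames Sum.inr)

/-! ### Queue specifications -/

/-- The infinite specification `E∞Q` of a FIFO queue over the alphabet `al`
with input channel `ci` and output channel `co`; the name of a state of the
queue is its contents (a string, insertion at the left, removal at the
right). -/
def infQueueSpec (C B V : Type) (al : List V) (ci co : C) :
    List V → Option (PExp C V B (List V)) := fun l =>
  some <|
    match l.getLast? with
    | none =>
        .alt (sumList al fun d => .pref (some (.recv ci d)) (.name [d])) .emp
    | some d =>
        .alt (.alt (.pref (some (.send co d)) (.name l.dropLast))
          (sumList al fun e => .pref (some (.recv ci e)) (.name (e :: l)))) .emp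

/-- The finite Bergstra–Klop queue specification `EQ` (with added `1`-summands):
for channels `(j,k,p)`,
`Q^{jk}_p ≝ Σ_d j?d.[ Q^{jp}_k ∥ (1 + k!d.Q^{pk}_j) ]_{{p}} + 1`. -/
def bkQueueSpec (C B V : Type) (al : List V) :
    C × C × C → Option (PExp C V B (C × C × C)) := fun jkp =>
  some <| .alt
    (sumList al fun d => .pref (some (.recv jkp.1 d))
      (.par {jkp.2.2} (.name (jkp.1, jkp.2.2, jkp.2.1))
        (.alt .emp (.pref (some (.send jkp.2.1 d)) (.name (jkp.2.2, jkp.2.1, jkp.1))))))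
    .emp

/-! ### Tape specifications -/

/-- Symbols communicated in the tape/queue specifications: tape symbols
(`dat d` for `d ∈ D□`), the fresh symbols `⊥` and `$`, and the move
instructions `L` and `R`. -/
inductive Sym (D : Type) : Type
  | dat : Option D → Sym D
  | bot : Sym D
  | dollar : Sym D
  | mvL : Sym D
  | mvR : Sym D
deriving DecidableEq

instance {D : Type} [Fintype D] [DecidableEq D] : Fintype (Sym D) where
  elems := ((Finset.univ : Finset (Option D)).image Sym.dat) ∪
    {Sym.bot, Sym.dollar, Sym.mvL, Sym.mvR}
  complete := by intro x; cases x <;> simp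

/-- The queue alphabet `D□ ∪ {⊥, $}`. -/
noncomputable def qAlphList (D : Type) [Fintype D] [DecidableEq D] : List (Sym D) :=
  ((Finset.univ : Finset (Sym D)).filter fun v => v ≠ Sym.mvL ∧ v ≠ Sym.mvR).toList

def dmap {D : Type} (l : List (Option D)) : List (Sym D) := l.map Sym.dat

def movSym {D : Type} : Move → Sym D
  | .L => .mvL
  | .R => .mvR

/-- Names of the finite tape-controller specification `ET`. -/
inductive TName (D : Type) : Type
  | H : Option D → TName D
  | HL : Option D → TName D
  | HR : Option D → TName D
  | Back : TName D
  | Fwd : Option D → TName D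
  | FwdBot : TName D

/-- The finite tape-controller specification `ET`, with read channel `cr`,
write channel `cw`, move channel `cm`, and a queue interface on channels
`ci` (insert) and `co` (remove). -/
noncomputable def tapeCtrlSpec (C D B : Type) [Fintype D] (ci co cr cw cm : C) :
    TName D → Option (PExp C (Sym D) B (TName D))
  | .H d => some <| .alt (.alt (.alt (.alt
      (.pref (some (.send cr (.dat d))) (.name (.H d)))
      (sumList (allOf (Option D)) fun e =>
        .pref (some (.recv cw (.dat e))) (.name (.H e))))
      (.pref (some (.recv cm .mvL)) (.name (.HL d))))
      (.pref (some (.recv cm .mvR)) (.name (.HR d))))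
      .emp
  | .HL d => some <| .pref (some (.send ci (.dat d)))
      (.alt (sumList (allOf (Option D)) fun e =>
          .pref (some (.recv co (.dat e))) (.name (.H e)))
        (.pref (some (.recv co .bot))
          (.pref (some (.send ci .dollar))
            (.pref (some (.send ci .bot)) (.name .Back)))))
  | .Back => some <| .alt
      (sumList (allOf (Option D)) fun d =>
        .pref (some (.recv co (.dat d)))
          (.pref (some (.send ci (.dat d))) (.name .Back)))
      (.pref (some (.recv co .dollar)) (.name (.H none)))
  | .HR d => some <| .pref (some (.send ci .dollar))
      (.pref (some (.send ci (.dat d)))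
        (.alt (sumList (allOf (Option D)) fun e =>
            .pref (some (.recv co (.dat e))) (.name (.Fwd e)))
          (.pref (some (.recv co .bot)) (.name .FwdBot))))
  | .Fwd d => some <| .alt (.alt
      (sumList (allOf (Option D)) fun e =>
        .pref (some (.recv co (.dat e)))
          (.pref (some (.send ci (.dat d))) (.name (.Fwd e))))
      (.pref (some (.recv co .bot))
        (.pref (some (.send ci (.dat d))) (.name .FwdBot))))
      (.pref (some (.recv co .dollar)) (.name (.H d)))
  | .FwdBot => some <| .alt
      (sumList (allOf (Option D)) fun e =>
        .pref (some (.recv co (.dat e)))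
          (.pref (some (.send ci .bot)) (.name (.Fwd e))))
      (.pref (some (.recv co .dollar))
        (.pref (some (.send ci .bot)) (.name (.H none))))

/-- The infinite tape specification `E∞T`: one name for every tape instance,
with read channel `cr`, write channel `cw` and move channel `cm`. -/
noncomputable def infTapeSpec (C B D : Type) [Fintype D] (cr cw cm : C) :
    Tape D → Option (PExp C (Sym D) B (Tape D)) := fun t =>
  some <| .alt (.alt (.alt (.alt
    (.pref (some (.send cr (.dat t.head))) (.name t))
    (sumList (allOf (Option D)) fun e =>
      .pref (some (.recv cw (.dat e))) (.name ⟨t.left, e, t.right⟩)))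
    (.pref (some (.recv cm .mvL)) (.name (t.writeMove t.head .L))))
    (.pref (some (.recv cm .mvR)) (.name (t.writeMove t.head .R))))
    .emp

/-- The finite-control specification `Efc` of an RTM `M`:
`C_{s,d} ≝ Σ_{(s,d,a,e,Mv,t) ∈ →} a.w!e.m!Mv.Σ_{f∈D□} r?f.C_{t,f}`,
with an additional summand `1` iff `s` is a final state of `M`. -/
noncomputable def fcSpec {C D B : Type} [Fintype D] [Fintype B]
    (M : RTM B D) (cr cw cm : C) :
    M.Q × Option D → Option (PExp C (Sym D) B (M.Q × Option D)) := fun sd =>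
  let base : PExp C (Sym D) B (M.Q × Option D) :=
    bigAlt ((((Set.toFinite {x : Option B × Option D × Move × M.Q |
        M.trans sd.1 sd.2 x.1 x.2.1 x.2.2.1 x.2.2.2}).toFinset).toList).map fun x =>
      .pref (Option.map CAct.base x.1)
        (.pref (some (.send cw (.dat x.2.1)))
          (.pref (some (.send cm (movSym x.2.2.1)))
            (sumList (allOf (Option D)) fun f =>
              .pref (some (.recv cr (.dat f))) (.name (x.2.2.2, f))))))
  haveI := Classical.propDecidable (sd.1 ∈ M.final)
  some (if sd.1 ∈ M.final then .alt base .emp else base)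

end RTMPaper

namespace RTMPaper

/-- The tape-controller specification combined with the infinite queue
specification (over the queue alphabet `D□ ∪ {⊥, $}`). -/
noncomputable def EdTQ (C D B : Type) [Fintype D] [DecidableEq D]
    (ci co cr cw cm : C) :
    (TName D ⊕ List (Sym D)) →
      Option (PExp C (Sym D) B (TName D ⊕ List (Sym D))) :=
  combineSpec (tapeCtrlSpec C D B ci co cr cw cm)
    (infQueueSpec C B (Sym D) (qAlphList D) ci co)

/-!
After receiving a move instruction, the controller `H_d` and the queue `δR ⊥ δL` perform a
sequence of internal communications in which every intermediate configuration has exactly one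
transition, a τ-step. To move left, the controller pushes `d` and pulls the nearest symbol of
`δL`; if `δL` is empty it instead rotates the whole queue past a marker `$` so that a blank ends
up under the head. To move right, it pushes `$ d` and then cycles the whole queue through a
one-place buffer (the states `Fwd`) until it meets `$`, keeping the symbol it holds at that
moment. Such deterministic internal runs are inert for branching bisimilarity and finite, so
relating every tape instance to the stable configuration that encodes it, and closing under these
runs, yields a divergence-preserving branching bisimulation.
-/

section DetTau

variable {S A : Type}

def DetTauStep (tr : S → Option A → S → Prop) (final : S → Prop) (s t : S) : Prop :=
  ¬ final s ∧ ∀ a u, tr s a u ↔ a = none ∧ u = t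

lemma DetTauStep.tr_none {tr : S → Option A → S → Prop} {final : S → Prop} {s t : S}
    (h : DetTauStep tr final s t) : tr s none t :=
  (h.2 none t).2 ⟨rfl, rfl⟩

lemma LTS.tauReach_of_detTauSteps {T : LTS A} {s t : T.State}
    (h : Relation.ReflTransGen (DetTauStep T.tr (· ∈ T.final)) s t) : T.tauReach s t :=
  Relation.ReflTransGen.mono (fun _ _ h => DetTauStep.tr_none h) s t h

end DetTau

/-- The bisimulation relates `s₁` to every `s₂` that reaches, by deterministic τ-steps, some
`s₂'` with `S s₁ s₂'`. Such runs are inert, and they are finite, so together with the absence of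
τ-steps in `T₁` no divergence can occur. -/
theorem dpBranchingBisimilar_of_detTauSteps {A : Type} {T₁ T₂ : LTS A}
    (S : T₁.State → T₂.State → Prop)
    (no_tau : ∀ s₁ s₂ t₁, S s₁ s₂ → ¬ T₁.tr s₁ none t₁)
    (final_iff : ∀ s₁ s₂, S s₁ s₂ → (s₁ ∈ T₁.final ↔ s₂ ∈ T₂.final))
    (fwd : ∀ s₁ s₂ a t₁, S s₁ s₂ → T₁.tr s₁ a t₁ → ∃ t₂ t₂', T₂.tr s₂ a t₂ ∧
      Relation.ReflTransGen (DetTauStep T₂.tr (· ∈ T₂.final)) t₂ t₂' ∧ S t₁ t₂')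
    (bwd : ∀ s₁ s₂ a t₂, S s₁ s₂ → T₂.tr s₂ a t₂ → ∃ t₁ t₂', T₁.tr s₁ a t₁ ∧
      Relation.ReflTransGen (DetTauStep T₂.tr (· ∈ T₂.final)) t₂ t₂' ∧ S t₁ t₂')
    (init : S T₁.init T₂.init) :
    DPBranchingBisimilar T₁ T₂ := by
  set Det := Relation.ReflTransGen (DetTauStep T₂.tr (· ∈ T₂.final))
  have no_divergence : ∀ s₁ s₂ s₂', Det s₂ s₂' → S s₁ s₂' →
      ∀ f : ℕ → T₂.State, f 0 = s₂ → (∀ i, T₂.tauStep (f i) (f (i + 1))) → False := by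
    intro s₁ s₂ s₂' hdet hS
    induction hdet using Relation.ReflTransGen.head_induction_on with
    | refl =>
      rintro f rfl hf
      obtain ⟨t₁, -, htr, -⟩ := bwd _ _ _ _ hS (hf 0)
      exact no_tau _ _ _ hS htr
    | head hstep _ ih =>
      rintro f rfl hf
      obtain ⟨-, rfl⟩ := (hstep.2 _ _).1 (hf 0)
      exact ih (fun i => f (i + 1)) rfl fun i => hf (i + 1)
  refine ⟨fun s₁ s₂ => ∃ s₂', Det s₂ s₂' ∧ S s₁ s₂', ⟨?_, ?_, ?_, ?_⟩, ⟨?_, ?_⟩,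
    ⟨_, .refl, init⟩⟩
  · rintro s₁ s₂ a s₁' ⟨s₂', hdet, hS⟩ htr
    obtain ⟨t₂, t₂', htr₂, hdet', hS'⟩ := fwd _ _ _ _ hS htr
    exact ⟨s₂', t₂, LTS.tauReach_of_detTauSteps hdet, .inl htr₂, ⟨s₂', .refl, hS⟩,
      ⟨t₂', hdet', hS'⟩⟩
  · rintro s₁ s₂ a t₂ ⟨s₂', hdet, hS⟩ htr
    rcases hdet.cases_head with rfl | ⟨u, hstep, hdet⟩
    · obtain ⟨t₁, t₂', htr₁, hdet', hS'⟩ := bwd _ _ _ _ hS htr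
      exact ⟨s₁, t₁, .refl, .inl htr₁, ⟨s₂, .refl, hS⟩, ⟨t₂', hdet', hS'⟩⟩
    · obtain ⟨rfl, rfl⟩ := (hstep.2 _ _).1 htr
      exact ⟨s₁, s₁, .refl, .inr ⟨rfl, rfl⟩, ⟨s₂', .head hstep hdet, hS⟩, ⟨s₂', hdet, hS⟩⟩
  · rintro s₁ s₂ ⟨s₂', hdet, hS⟩ hfin
    exact ⟨s₂', LTS.tauReach_of_detTauSteps hdet, ⟨s₂', .refl, hS⟩, (final_iff _ _ hS).1 hfin⟩
  · rintro s₁ s₂ ⟨s₂', hdet, hS⟩ hfin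
    rcases hdet.cases_head with rfl | ⟨u, hstep, -⟩
    · exact ⟨s₁, .refl, ⟨s₂, .refl, hS⟩, (final_iff _ _ hS).2 hfin⟩
    · exact absurd hfin hstep.1
  · rintro s₂ f hf hR
    obtain ⟨s₂', -, hS⟩ := hR 0
    exact absurd (hf 0) (no_tau _ _ _ hS)
  · rintro s₁ f hf hR
    obtain ⟨s₂', hdet, hS⟩ := hR 0
    exact (no_divergence s₁ _ s₂' hdet hS f rfl hf).elim

section Semantics

variable {C V B N : Type} {E : N → Option (PExp C V B N)}

@[simp] lemma step_dl {a r} : ¬ Step E .dl a r := nofun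

@[simp] lemma step_emp {a r} : ¬ Step E .emp a r := nofun

@[simp] lemma step_pref {b p a r} : Step E (.pref b p) a r ↔ a = b ∧ r = p :=
  ⟨by rintro ⟨⟩; exact ⟨rfl, rfl⟩, by rintro ⟨rfl, rfl⟩; exact .pref⟩

@[simp] lemma step_alt {p q a r} : Step E (.alt p q) a r ↔ Step E p a r ∨ Step E q a r :=
  ⟨by rintro (h | h) <;> simp [*], by rintro (h | h); exacts [.altL h, .altR h]⟩

lemma step_name_iff {n a r} : Step E (.name n) a r ↔ ∃ p, E n = some p ∧ Step E p a r :=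
  ⟨by rintro (_ | _ | _ | _ | _ | _ | _ | ⟨h, hs⟩); exact ⟨_, h, hs⟩,
    fun ⟨_, h, hs⟩ => .name h hs⟩

@[simp] lemma step_sumList {ι : Type} {l : List ι} {f : ι → PExp C V B N} {a r} :
    Step E (sumList l f) a r ↔ ∃ x ∈ l, Step E (f x) a r := by
  induction l with
  | nil => simp [sumList, bigAlt]
  | cons x l ih => simp only [sumList, bigAlt] at ih ⊢; simp [ih]

lemma step_par {C' : Set C} {p q : PExp C V B N} {a r} :
    Step E (.par C' p q) a r ↔
      (∃ p', Step E p a p' ∧ ¬ IsComm C' a ∧ r = .par C' p' q) ∨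
      (∃ q', Step E q a q' ∧ ¬ IsComm C' a ∧ r = .par C' p q') ∨
      (∃ c ∈ C', ∃ d p' q', a = none ∧ r = .par C' p' q' ∧
        ((Step E p (some (.send c d)) p' ∧ Step E q (some (.recv c d)) q') ∨
         (Step E p (some (.recv c d)) p' ∧ Step E q (some (.send c d)) q'))) := by
  constructor
  · intro h
    cases h with
    | parL h hnc => exact .inl ⟨_, h, hnc, rfl⟩
    | parR h hnc => exact .inr (.inl ⟨_, h, hnc, rfl⟩)
    | syncSR hc h₁ h₂ => exact .inr (.inr ⟨_, hc, _, _, _, rfl, rfl, .inl ⟨h₁, h₂⟩⟩)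
    | syncRS hc h₁ h₂ => exact .inr (.inr ⟨_, hc, _, _, _, rfl, rfl, .inr ⟨h₁, h₂⟩⟩)
  · rintro (⟨p', h, hnc, rfl⟩ | ⟨q', h, hnc, rfl⟩ |
      ⟨c, hc, d, p', q', rfl, rfl, ⟨h₁, h₂⟩ | ⟨h₁, h₂⟩⟩)
    exacts [.parL h hnc, .parR h hnc, .syncSR hc h₁ h₂, .syncRS hc h₁ h₂]

@[simp] lemma isComm_send {C' : Set C} {c : C} {v : V} :
    IsComm (B := B) C' (some (.send c v)) ↔ c ∈ C' := Iff.rfl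

@[simp] lemma isComm_recv {C' : Set C} {c : C} {v : V} :
    IsComm (B := B) C' (some (.recv c v)) ↔ c ∈ C' := Iff.rfl

@[simp] lemma term_emp : Term E .emp := .emp

@[simp] lemma term_dl : ¬ Term E (.dl : PExp C V B N) := nofun

@[simp] lemma term_pref {b p} : ¬ Term E (.pref b p) := nofun

@[simp] lemma term_alt {p q} : Term E (.alt p q) ↔ Term E p ∨ Term E q :=
  ⟨by rintro (h | h) <;> simp [*], by rintro (h | h); exacts [.altL h, .altR h]⟩

lemma term_name_iff {n} : Term E (.name n) ↔ ∃ p, E n = some p ∧ Term E p :=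
  ⟨fun h => by cases h with | name h ht => exact ⟨_, h, ht⟩, fun ⟨_, h, ht⟩ => .name h ht⟩

@[simp] lemma term_par {C' p q} : Term E (.par C' p q) ↔ Term E p ∧ Term E q :=
  ⟨fun h => by cases h with | par h₁ h₂ => exact ⟨h₁, h₂⟩, fun h => .par h.1 h.2⟩

@[simp] lemma term_sumList_pref {ι : Type} {l : List ι} {g : ι → Option (CAct C V B)}
    {f : ι → PExp C V B N} : ¬ Term E (sumList l fun x => .pref (g x) (f x)) := by
  induction l with
  | nil => simp [sumList, bigAlt]
  | cons x l ih => simp only [sumList, bigAlt] at ih ⊢; simp [ih]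

lemma pLTS.exists_detTauSteps {p : PExp C V B N} {s : (pLTS E p).State} {q : PExp C V B N}
    (h : Relation.ReflTransGen (DetTauStep (Step E) (Term E)) s.1 q) :
    ∃ t : (pLTS E p).State, t.1 = q ∧
      Relation.ReflTransGen (DetTauStep (pLTS E p).tr (· ∈ (pLTS E p).final)) s t := by
  induction h with
  | refl => exact ⟨s, rfl, .refl⟩
  | tail _ hstep ih =>
    obtain ⟨t, rfl, ht⟩ := ih
    refine ⟨⟨_, t.2.tail ⟨none, hstep.tr_none⟩⟩, rfl, ht.tail ?_⟩
    exact ⟨hstep.1, fun a u => (hstep.2 a u.1).trans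
      (and_congr Iff.rfl ⟨fun h => Subtype.ext h, fun h => h ▸ rfl⟩)⟩

end Semantics

@[simp] lemma mapNames_sumList {C V B N N' ι : Type} (f : N → N') (l : List ι)
    (g : ι → PExp C V B N) :
    (sumList l g).mapNames f = sumList l fun x => (g x).mapNames f := by
  induction l with
  | nil => rfl
  | cons x l ih => simpa [sumList, bigAlt, PExp.mapNames] using ih

@[simp] lemma mem_allOf {ι : Type} [Fintype ι] (x : ι) : x ∈ allOf ι := by
  simp [allOf]

theorem dpBranchingBisimilar_pLTS_of_detTauSteps {C V B N₁ N₂ : Type}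
    {E₁ : N₁ → Option (PExp C V B N₁)} {E₂ : N₂ → Option (PExp C V B N₂)}
    {p₁ : PExp C V B N₁} {p₂ : PExp C V B N₂}
    (S : PExp C V B N₁ → PExp C V B N₂ → Prop)
    (no_tau : ∀ q₁ q₂ r₁, S q₁ q₂ → ¬ Step E₁ q₁ none r₁)
    (final_iff : ∀ q₁ q₂, S q₁ q₂ → (Term E₁ q₁ ↔ Term E₂ q₂))
    (fwd : ∀ q₁ q₂ a r₁, S q₁ q₂ → Step E₁ q₁ a r₁ → ∃ r₂ r₂', Step E₂ q₂ a r₂ ∧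
      Relation.ReflTransGen (DetTauStep (Step E₂) (Term E₂)) r₂ r₂' ∧ S r₁ r₂')
    (bwd : ∀ q₁ q₂ a r₂, S q₁ q₂ → Step E₂ q₂ a r₂ → ∃ r₁ r₂', Step E₁ q₁ a r₁ ∧
      Relation.ReflTransGen (DetTauStep (Step E₂) (Term E₂)) r₂ r₂' ∧ S r₁ r₂')
    (init : S p₁ p₂) :
    DPBranchingBisimilar (pLTS E₁ p₁) (pLTS E₂ p₂) := by
  refine dpBranchingBisimilar_of_detTauSteps (fun s₁ s₂ => S s₁.1 s₂.1)
    (fun s₁ s₂ t₁ hS => no_tau _ _ t₁.1 hS) (fun s₁ s₂ hS => final_iff _ _ hS) ?_ ?_ init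
  · intro s₁ s₂ a t₁ hS htr
    obtain ⟨r₂, r₂', htr₂, hdet, hS'⟩ := fwd _ _ _ _ hS htr
    let t₂ : (pLTS E₂ p₂).State := ⟨r₂, s₂.2.tail ⟨a, htr₂⟩⟩
    obtain ⟨t₂', rfl, hdet'⟩ := pLTS.exists_detTauSteps (s := t₂) hdet
    exact ⟨t₂, t₂', htr₂, hdet', hS'⟩
  · intro s₁ s₂ a t₂ hS htr
    obtain ⟨r₁, r₂', htr₁, hdet, hS'⟩ := bwd _ _ _ _ hS htr
    obtain ⟨t₂', rfl, hdet'⟩ := pLTS.exists_detTauSteps (s := t₂) hdet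
    exact ⟨⟨r₁, s₁.2.tail ⟨a, htr₁⟩⟩, t₂', htr₁, hdet', hS'⟩

section TapeSpec

variable {C D B : Type} [Fintype D] {cr cw cm : C} {a : Option (CAct C (Sym D) B)}

lemma step_tape {t : Tape D} {p : PExp C (Sym D) B (Tape D)} :
    Step (infTapeSpec C B D cr cw cm) (.name t) a p ↔
      (a = some (.send cr (.dat t.head)) ∧ p = .name t) ∨
      (∃ e, a = some (.recv cw (.dat e)) ∧ p = .name ⟨t.left, e, t.right⟩) ∨
      (a = some (.recv cm .mvL) ∧ p = .name (t.writeMove t.head .L)) ∨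
      (a = some (.recv cm .mvR) ∧ p = .name (t.writeMove t.head .R)) := by
  simp [step_name_iff, infTapeSpec, or_assoc]

lemma term_tape {t : Tape D} : Term (infTapeSpec C B D cr cw cm) (.name t) :=
  .name rfl (.altR .emp)

end TapeSpec

section ControllerStates

variable {C D B : Type}

def ctrl (n : TName D) : PExp C (Sym D) B (TName D ⊕ List (Sym D)) := .name (.inl n)

def queue (l : List (Sym D)) : PExp C (Sym D) B (TName D ⊕ List (Sym D)) := .name (.inr l)

def withQueue (ci co : C) (c : PExp C (Sym D) B (TName D ⊕ List (Sym D))) (q : List (Sym D)) :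
    PExp C (Sym D) B (TName D ⊕ List (Sym D)) :=
  .par {ci, co} c (queue q)

/-- The state of `HL_d` after `i!d`. -/
noncomputable def afterHL [Fintype D] (ci co : C) : PExp C (Sym D) B (TName D ⊕ List (Sym D)) :=
  .alt (sumList (allOf (Option D)) fun e => .pref (some (.recv co (.dat e))) (ctrl (.H e)))
    (.pref (some (.recv co .bot))
      (.pref (some (.send ci .dollar)) (.pref (some (.send ci .bot)) (ctrl .Back))))

/-- The state of `HR_d` after `i!$.i!d`. -/
noncomputable def afterHR [Fintype D] (co : C) : PExp C (Sym D) B (TName D ⊕ List (Sym D)) :=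
  .alt (sumList (allOf (Option D)) fun e => .pref (some (.recv co (.dat e))) (ctrl (.Fwd e)))
    (.pref (some (.recv co .bot)) (ctrl .FwdBot))

def IsCell : Sym D → Prop
  | .dat _ => True
  | .bot => True
  | _ => False

/-- `Fwd_x` for a cell `x` (a tape symbol or `⊥`); its value at other symbols is irrelevant. -/
def fwd : Sym D → PExp C (Sym D) B (TName D ⊕ List (Sym D))
  | .dat e => ctrl (.Fwd e)
  | _ => ctrl .FwdBot

/-- The queue `δR ⊥ δL` for the tape `δL ď δR`: queue names list their contents newest first,
and `t.left` lists `δL` from the head outwards. -/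
def tapeQueue (t : Tape D) : List (Sym D) := dmap t.right ++ .bot :: dmap t.left.reverse

def tapeCfg (ci co : C) (t : Tape D) : PExp C (Sym D) B (TName D ⊕ List (Sym D)) :=
  withQueue ci co (ctrl (.H t.head)) (tapeQueue t)

def TapeRel (ci co : C) (p : PExp C (Sym D) B (Tape D))
    (q : PExp C (Sym D) B (TName D ⊕ List (Sym D))) : Prop :=
  ∃ t, p = .name t ∧ q = tapeCfg ci co t

lemma TapeRel.not_step_none [Fintype D] {ci co cr cw cm : C} {p p' : PExp C (Sym D) B (Tape D)}
    {q : PExp C (Sym D) B (TName D ⊕ List (Sym D))} (h : TapeRel ci co p q) :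
    ¬ Step (infTapeSpec C B D cr cw cm) p none p' := by
  obtain ⟨t, rfl, -⟩ := h
  intro hp
  rcases step_tape.1 hp with ⟨⟨⟩, -⟩ | ⟨_, ⟨⟩, -⟩ | ⟨⟨⟩, -⟩ | ⟨⟨⟩, -⟩

end ControllerStates

lemma IsCell.mem_qAlphList {D : Type} [Fintype D] [DecidableEq D] {v : Sym D} (hv : IsCell v) :
    v ∈ qAlphList D := by
  cases v <;> simp_all [IsCell, qAlphList]

section Controller

variable {C D B : Type} [Fintype D] [DecidableEq D] {ci co cr cw cm : C}
  {a : Option (CAct C (Sym D) B)} {r : PExp C (Sym D) B (TName D ⊕ List (Sym D))}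

local notation "𝔼" => EdTQ C D B ci co cr cw cm

lemma step_ctrl_H {d : Option D} :
    Step 𝔼 (ctrl (.H d)) a r ↔
      (a = some (.send cr (.dat d)) ∧ r = ctrl (.H d)) ∨
      (∃ e, a = some (.recv cw (.dat e)) ∧ r = ctrl (.H e)) ∨
      (a = some (.recv cm .mvL) ∧ r = ctrl (.HL d)) ∨
      (a = some (.recv cm .mvR) ∧ r = ctrl (.HR d)) := by
  simp [ctrl, step_name_iff, EdTQ, combineSpec, tapeCtrlSpec, PExp.mapNames, or_assoc]

lemma step_ctrl_HL {d : Option D} :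
    Step 𝔼 (ctrl (.HL d)) a r ↔ a = some (.send ci (.dat d)) ∧ r = afterHL ci co := by
  simp [ctrl, step_name_iff, EdTQ, combineSpec, tapeCtrlSpec, PExp.mapNames, afterHL]

lemma step_afterHL :
    Step 𝔼 (afterHL ci co) a r ↔ ∃ v, a = some (.recv co v) ∧
      ((∃ e, v = .dat e ∧ r = ctrl (.H e)) ∨
       (v = .bot ∧
        r = .pref (some (.send ci .dollar)) (.pref (some (.send ci .bot)) (ctrl .Back)))) := by
  simp [afterHL, and_or_left, exists_or]

lemma step_ctrl_Back :
    Step 𝔼 (ctrl .Back) a r ↔ ∃ v, a = some (.recv co v) ∧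
      ((∃ e, v = .dat e ∧ r = .pref (some (.send ci (.dat e))) (ctrl .Back)) ∨
       (v = .dollar ∧ r = ctrl (.H none))) := by
  simp [ctrl, step_name_iff, EdTQ, combineSpec, tapeCtrlSpec, PExp.mapNames, and_or_left, exists_or]

lemma step_ctrl_HR {d : Option D} :
    Step 𝔼 (ctrl (.HR d)) a r ↔
      a = some (.send ci .dollar) ∧ r = .pref (some (.send ci (.dat d))) (afterHR co) := by
  simp [ctrl, step_name_iff, EdTQ, combineSpec, tapeCtrlSpec, PExp.mapNames, afterHR]

lemma step_afterHR :
    Step 𝔼 (afterHR co) a r ↔ ∃ v, a = some (.recv co v) ∧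
      ((∃ e, v = .dat e ∧ r = ctrl (.Fwd e)) ∨ (v = .bot ∧ r = ctrl .FwdBot)) := by
  simp [afterHR, and_or_left, exists_or]

lemma step_ctrl_Fwd {d : Option D} :
    Step 𝔼 (ctrl (.Fwd d)) a r ↔ ∃ v, a = some (.recv co v) ∧
      ((∃ e, v = .dat e ∧ r = .pref (some (.send ci (.dat d))) (ctrl (.Fwd e))) ∨
       (v = .bot ∧ r = .pref (some (.send ci (.dat d))) (ctrl .FwdBot)) ∨
       (v = .dollar ∧ r = ctrl (.H d))) := by
  simp [ctrl, step_name_iff, EdTQ, combineSpec, tapeCtrlSpec, PExp.mapNames, and_or_left,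
    exists_or, or_assoc]

lemma step_ctrl_FwdBot :
    Step 𝔼 (ctrl .FwdBot) a r ↔ ∃ v, a = some (.recv co v) ∧
      ((∃ e, v = .dat e ∧ r = .pref (some (.send ci .bot)) (ctrl (.Fwd e))) ∨
       (v = .dollar ∧ r = .pref (some (.send ci .bot)) (ctrl (.H none)))) := by
  simp [ctrl, step_name_iff, EdTQ, combineSpec, tapeCtrlSpec, PExp.mapNames, and_or_left,
    exists_or]

lemma step_queue {l : List (Sym D)} :
    Step 𝔼 (queue l) a r ↔
      (∃ v ∈ qAlphList D, a = some (.recv ci v) ∧ r = queue (v :: l)) ∨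
      (∃ l' v, l = l' ++ [v] ∧ a = some (.send co v) ∧ r = queue l') := by
  rcases List.eq_nil_or_concat' l with rfl | ⟨l, v, rfl⟩ <;>
    simp [queue, step_name_iff, EdTQ, combineSpec, infQueueSpec, PExp.mapNames, or_comm]

lemma term_queue {l : List (Sym D)} : Term 𝔼 (queue l) := by
  rcases List.eq_nil_or_concat' l with rfl | ⟨l, v, rfl⟩ <;>
    exact .name (by simp [EdTQ, combineSpec, infQueueSpec]; rfl) (.altR .emp)

lemma step_withQueue {c : PExp C (Sym D) B (TName D ⊕ List (Sym D))} {q : List (Sym D)} :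
    Step 𝔼 (withQueue ci co c q) a r ↔
      (∃ c', Step 𝔼 c a c' ∧ ¬ IsComm {ci, co} a ∧ r = withQueue ci co c' q) ∨
      (∃ c', ∃ v ∈ qAlphList D, Step 𝔼 c (some (.send ci v)) c' ∧ a = none ∧
        r = withQueue ci co c' (v :: q)) ∨
      (∃ c' q' v, q = q' ++ [v] ∧ Step 𝔼 c (some (.recv co v)) c' ∧ a = none ∧
        r = withQueue ci co c' q') := by
  rw [withQueue, step_par]
  constructor
  · rintro (⟨c', h, hnc, rfl⟩ | ⟨q', h, hnc, rfl⟩ |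
      ⟨ch, -, v, c', q', rfl, rfl, ⟨h₁, h₂⟩ | ⟨h₁, h₂⟩⟩)
    · exact .inl ⟨c', h, hnc, rfl⟩
    · rcases step_queue.1 h with ⟨v, -, rfl, -⟩ | ⟨-, v, -, rfl, -⟩ <;> simp at hnc
    · obtain ⟨v, hv, ⟨⟩, rfl⟩ | ⟨-, -, -, ⟨⟩, -⟩ := step_queue.1 h₂
      exact .inr (.inl ⟨c', v, hv, h₁, rfl, rfl⟩)
    · obtain ⟨-, -, ⟨⟩, -⟩ | ⟨q', v, rfl, ⟨⟩, rfl⟩ := step_queue.1 h₂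
      exact .inr (.inr ⟨c', q', v, rfl, h₁, rfl, rfl⟩)
  · rintro (⟨c', h, hnc, rfl⟩ | ⟨c', v, hv, h, rfl, rfl⟩ | ⟨c', q', v, rfl, h, rfl, rfl⟩)
    · exact .inl ⟨c', h, hnc, rfl⟩
    · exact .inr (.inr ⟨ci, by simp, v, c', _, rfl, rfl,
        .inl ⟨h, step_queue.2 (.inl ⟨v, hv, rfl, rfl⟩)⟩⟩)
    · exact .inr (.inr ⟨co, by simp, v, c', _, rfl, rfl,
        .inr ⟨h, step_queue.2 (.inr ⟨q', v, rfl, rfl, rfl⟩)⟩⟩)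

lemma term_ctrl {n : TName D} : Term 𝔼 (ctrl n) ↔ ∃ d, n = .H d := by
  cases n <;> simp [ctrl, term_name_iff, EdTQ, combineSpec, tapeCtrlSpec, PExp.mapNames]

local notation:50 p " ⟶τ " q => DetTauStep (Step 𝔼) (Term 𝔼) p q

local notation:50 p " ⟶τ* " q => Relation.ReflTransGen (DetTauStep (Step 𝔼) (Term 𝔼)) p q

lemma detTauStep_withQueue_send {c k : PExp C (Sym D) B (TName D ⊕ List (Sym D))}
    {v : Sym D} {q : List (Sym D)} (hv : v ∈ qAlphList D)
    (hc : ∀ a r, Step 𝔼 c a r ↔ a = some (.send ci v) ∧ r = k) (hnt : ¬ Term 𝔼 c) :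
    withQueue ci co c q ⟶τ withQueue ci co k (v :: q) := by
  refine ⟨fun h => hnt (term_par.1 h).1, fun a r => ⟨?_, ?_⟩⟩
  · intro hs
    rcases step_withQueue.1 hs with
      ⟨c', h, hnc, rfl⟩ | ⟨c', v', -, h, rfl, rfl⟩ | ⟨c', q', v', -, h, -⟩ <;>
      obtain ⟨⟨⟩, rfl⟩ := (hc _ _).1 h
    · simp at hnc
    · exact ⟨rfl, rfl⟩
  · rintro ⟨rfl, rfl⟩
    exact step_withQueue.2 (.inr (.inl ⟨k, v, hv, (hc _ _).2 ⟨rfl, rfl⟩, rfl, rfl⟩))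

lemma detTauStep_withQueue_recv {c k : PExp C (Sym D) B (TName D ⊕ List (Sym D))}
    {P : Sym D → PExp C (Sym D) B (TName D ⊕ List (Sym D)) → Prop} {v : Sym D}
    {q : List (Sym D)} (hc : ∀ a r, Step 𝔼 c a r ↔ ∃ v, a = some (.recv co v) ∧ P v r)
    (hk : ∀ r, P v r ↔ r = k) (hnt : ¬ Term 𝔼 c) :
    withQueue ci co c (q ++ [v]) ⟶τ withQueue ci co k q := by
  refine ⟨fun h => hnt (term_par.1 h).1, fun a r => ⟨?_, ?_⟩⟩
  · intro hs
    rcases step_withQueue.1 hs with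
      ⟨c', h, hnc, rfl⟩ | ⟨c', v', -, h, -⟩ | ⟨c', q', v', hq, h, rfl, rfl⟩ <;>
      obtain ⟨v'', ⟨⟩, hP⟩ := (hc _ _).1 h
    · simp at hnc
    · obtain ⟨rfl, rfl⟩ := List.append_singleton_inj.1 hq
      exact ⟨rfl, by rw [(hk _).1 hP]⟩
  · rintro ⟨rfl, rfl⟩
    exact step_withQueue.2
      (.inr (.inr ⟨k, q, v, rfl, (hc _ _).2 ⟨v, rfl, (hk k).2 rfl⟩, rfl, rfl⟩))

lemma detTauStep_withQueue_pref_send {k : PExp C (Sym D) B (TName D ⊕ List (Sym D))}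
    {v : Sym D} {q : List (Sym D)} (hv : v ∈ qAlphList D) :
    withQueue ci co (.pref (some (.send ci v)) k) q ⟶τ withQueue ci co k (v :: q) :=
  detTauStep_withQueue_send hv (fun _ _ => step_pref) term_pref

variable {q : List (Sym D)}

lemma detTauStep_HL {d : Option D} :
    withQueue ci co (ctrl (.HL d)) q ⟶τ withQueue ci co (afterHL ci co) (.dat d :: q) :=
  detTauStep_withQueue_send (by simp [qAlphList]) (fun _ _ => step_ctrl_HL)
    (by simp [term_ctrl])

lemma detTauStep_afterHL_dat {e : Option D} :
    withQueue ci co (afterHL ci co) (q ++ [.dat e]) ⟶τ withQueue ci co (ctrl (.H e)) q :=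
  detTauStep_withQueue_recv (fun _ _ => step_afterHL) (by simp) (by simp [afterHL])

lemma detTauStep_afterHL_bot :
    withQueue ci co (afterHL ci co) (q ++ [.bot]) ⟶τ withQueue ci co
      (.pref (some (.send ci .dollar)) (.pref (some (.send ci .bot)) (ctrl .Back))) q :=
  detTauStep_withQueue_recv (fun _ _ => step_afterHL) (by simp) (by simp [afterHL])

lemma detTauStep_Back_dat {e : Option D} :
    withQueue ci co (ctrl .Back) (q ++ [.dat e]) ⟶τ
      withQueue ci co (.pref (some (.send ci (.dat e))) (ctrl .Back)) q :=
  detTauStep_withQueue_recv (fun _ _ => step_ctrl_Back) (by simp) (by simp [term_ctrl])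

lemma detTauStep_Back_dollar :
    withQueue ci co (ctrl .Back) (q ++ [.dollar]) ⟶τ withQueue ci co (ctrl (.H none)) q :=
  detTauStep_withQueue_recv (fun _ _ => step_ctrl_Back) (by simp) (by simp [term_ctrl])

lemma detTauStep_HR {d : Option D} :
    withQueue ci co (ctrl (.HR d)) q ⟶τ
      withQueue ci co (.pref (some (.send ci (.dat d))) (afterHR co)) (.dollar :: q) :=
  detTauStep_withQueue_send (by simp [qAlphList]) (fun _ _ => step_ctrl_HR)
    (by simp [term_ctrl])

lemma detTauStep_afterHR {v : Sym D} (hv : IsCell v) :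
    withQueue ci co (afterHR co) (q ++ [v]) ⟶τ withQueue ci co (fwd v) q := by
  cases v <;> simp only [IsCell] at hv <;>
    exact detTauStep_withQueue_recv (fun _ _ => step_afterHR) (by simp [fwd])
      (by simp [afterHR])

lemma detTauStep_fwd {u v : Sym D} (hu : IsCell u) (hv : IsCell v)
    (huv : u ≠ .bot ∨ v ≠ .bot) :
    withQueue ci co (fwd u) (q ++ [v]) ⟶τ
      withQueue ci co (.pref (some (.send ci u)) (fwd v)) q := by
  cases u <;> simp only [IsCell] at hu
  · cases v <;> simp only [IsCell] at hv <;>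
      exact detTauStep_withQueue_recv (fun _ _ => step_ctrl_Fwd) (by simp [fwd])
        (by simp [fwd, term_ctrl])
  · cases v <;> simp only [IsCell] at hv <;> simp at huv
    exact detTauStep_withQueue_recv (fun _ _ => step_ctrl_FwdBot) (by simp [fwd])
      (by simp [fwd, term_ctrl])

lemma detTauStep_Fwd_dollar {d : Option D} :
    withQueue ci co (ctrl (.Fwd d)) (q ++ [.dollar]) ⟶τ withQueue ci co (ctrl (.H d)) q :=
  detTauStep_withQueue_recv (fun _ _ => step_ctrl_Fwd) (by simp) (by simp [term_ctrl])

lemma detTauStep_FwdBot_dollar :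
    withQueue ci co (ctrl .FwdBot) (q ++ [.dollar]) ⟶τ
      withQueue ci co (.pref (some (.send ci .bot)) (ctrl (.H none))) q :=
  detTauStep_withQueue_recv (fun _ _ => step_ctrl_FwdBot) (by simp) (by simp [term_ctrl])

lemma detTauSteps_Back (pre : List (Sym D)) (v : List (Option D)) :
    withQueue ci co (ctrl .Back) (pre ++ dmap v) ⟶τ*
      withQueue ci co (ctrl .Back) (dmap v ++ pre) := by
  induction v using List.reverseRecOn generalizing pre with
  | nil => simpa [dmap] using .refl
  | append_singleton v x ih =>
    rw [show pre ++ dmap (v ++ [x]) = (pre ++ dmap v) ++ [.dat x] by simp [dmap]]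
    refine .head detTauStep_Back_dat
      (.head (detTauStep_withQueue_pref_send (by simp [qAlphList])) ?_)
    simpa [dmap] using ih (.dat x :: pre)

/-- `Fwd` is a one-place buffer: it passes on every cell it reads except the last one, which it
keeps. The bound on `⊥` is needed because `Fwd_⊥` cannot read a second `⊥`. -/
lemma detTauSteps_fwd {u z : Sym D} {xs ys pre : List (Sym D)}
    (hcells : ∀ y ∈ u :: ys, IsCell y) (hbot : (u :: ys).count .bot ≤ 1)
    (h : u :: ys = xs ++ [z]) :
    withQueue ci co (fwd u) (pre ++ ys.reverse) ⟶τ*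
      withQueue ci co (fwd z) (xs.reverse ++ pre) := by
  induction ys generalizing u xs pre with
  | nil =>
    obtain ⟨rfl, rfl⟩ := List.append_singleton_inj.1 (show [] ++ [u] = xs ++ [z] from h)
    simpa using .refl
  | cons y ys ih =>
    obtain _ | ⟨u, xs⟩ := xs
    · simp at h
    obtain ⟨rfl, h'⟩ := List.cons.inj h
    rw [List.reverse_cons, ← List.append_assoc]
    have huy : u ≠ .bot ∨ y ≠ .bot := by
      by_contra! h
      simp [h.1, h.2] at hbot
    refine .head (detTauStep_fwd (hcells u (by simp)) (hcells y (by simp)) huy)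
      (.head (detTauStep_withQueue_pref_send (hcells u (by simp)).mem_qAlphList) ?_)
    have hbot' : (y :: ys).count .bot ≤ 1 := by
      simp only [List.count_cons] at hbot ⊢
      omega
    simpa using ih (pre := u :: pre) (fun x hx => hcells x (by simp_all)) hbot' h'

lemma detTauSteps_afterHR {z : Sym D} {xs ys pre : List (Sym D)}
    (hcells : ∀ y ∈ ys, IsCell y) (hbot : ys.count .bot ≤ 1) (h : ys = xs ++ [z]) :
    withQueue ci co (afterHR co) (pre ++ ys.reverse) ⟶τ*
      withQueue ci co (fwd z) (xs.reverse ++ pre) := by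
  obtain _ | ⟨y, ys⟩ := ys
  · simp at h
  rw [List.reverse_cons, ← List.append_assoc]
  exact .head (detTauStep_afterHR (hcells y (by simp))) (detTauSteps_fwd hcells hbot h)

lemma detTauSteps_moveLeft (t : Tape D) :
    withQueue ci co (ctrl (.HL t.head)) (tapeQueue t) ⟶τ*
      tapeCfg ci co (t.writeMove t.head .L) := by
  obtain ⟨l, d, r⟩ := t
  refine .head detTauStep_HL ?_
  cases l with
  | cons x l =>
    have hq : Sym.dat d :: tapeQueue ⟨x :: l, d, r⟩ = tapeQueue ⟨l, x, d :: r⟩ ++ [.dat x] := by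
      simp [tapeQueue, dmap]
    rw [hq]
    exact .single detTauStep_afterHL_dat
  | nil =>
    have hq : Sym.dat d :: tapeQueue ⟨[], d, r⟩ = dmap (d :: r) ++ [.bot] := by
      simp [tapeQueue, dmap]
    rw [hq]
    refine .head detTauStep_afterHL_bot
      (.head (detTauStep_withQueue_pref_send (by simp [qAlphList]))
        (.head (detTauStep_withQueue_pref_send (by simp [qAlphList])) ?_))
    refine (detTauSteps_Back [.bot, .dollar] (d :: r)).trans (.single ?_)
    have hq' : dmap (d :: r) ++ [.bot, .dollar] = tapeQueue ⟨[], none, d :: r⟩ ++ [.dollar] := by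
      simp [tapeQueue, dmap]
    rw [hq']
    exact detTauStep_Back_dollar

lemma detTauSteps_moveRight (t : Tape D) :
    withQueue ci co (ctrl (.HR t.head)) (tapeQueue t) ⟶τ*
      tapeCfg ci co (t.writeMove t.head .R) := by
  obtain ⟨l, d, r⟩ := t
  refine .head detTauStep_HR (.head (detTauStep_withQueue_pref_send (by simp [qAlphList])) ?_)
  have hcells : ∀ y ∈ dmap l ++ .bot :: dmap r.reverse, IsCell y := by
    intro y hy
    simp only [dmap, List.mem_append, List.mem_map, List.mem_cons] at hy
    rcases hy with ⟨a, -, rfl⟩ | rfl | ⟨a, -, rfl⟩ <;> trivial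
  have hbot : (dmap l ++ .bot :: dmap r.reverse).count .bot ≤ 1 := by
    have hdat : ∀ l : List (Option D), (dmap l).count .bot = 0 := fun l => by
      rw [List.count_eq_zero]
      simp [dmap]
    simp [hdat]
  have hq : Sym.dat d :: Sym.dollar :: tapeQueue ⟨l, d, r⟩ =
      [.dat d, .dollar] ++ (dmap l ++ .bot :: dmap r.reverse).reverse := by
    simp [tapeQueue, dmap]
  rw [hq]
  cases r with
  | nil =>
    refine (detTauSteps_afterHR hcells hbot (xs := dmap l) (z := .bot) (by simp [dmap])).trans ?_
    rw [show (dmap l).reverse ++ [.dat d, .dollar] = ((dmap l).reverse ++ [.dat d]) ++ [.dollar] by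
      simp]
    refine .head detTauStep_FwdBot_dollar (.single ?_)
    have hcfg : tapeCfg (B := B) ci co (Tape.writeMove ⟨l, d, []⟩ d .R) =
        withQueue ci co (ctrl (.H none)) (.bot :: ((dmap l).reverse ++ [.dat d])) := by
      simp [tapeCfg, tapeQueue, dmap, Tape.writeMove]
    rw [hcfg]
    exact detTauStep_withQueue_pref_send (by simp [qAlphList])
  | cons x r =>
    refine (detTauSteps_afterHR hcells hbot (xs := dmap l ++ .bot :: dmap r.reverse) (z := .dat x)
      (by simp [dmap])).trans (.single ?_)
    have hq' : (dmap l ++ .bot :: dmap r.reverse).reverse ++ [.dat d, .dollar] =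
        tapeQueue ⟨d :: l, x, r⟩ ++ [.dollar] := by
      simp [tapeQueue, dmap]
    rw [hq']
    exact detTauStep_Fwd_dollar

lemma step_tapeCfg (hr : cr ∉ ({ci, co} : Set C)) (hw : cw ∉ ({ci, co} : Set C))
    (hm : cm ∉ ({ci, co} : Set C)) {t : Tape D} :
    Step 𝔼 (tapeCfg ci co t) a r ↔
      (a = some (.send cr (.dat t.head)) ∧ r = tapeCfg ci co t) ∨
      (∃ e, a = some (.recv cw (.dat e)) ∧ r = tapeCfg ci co ⟨t.left, e, t.right⟩) ∨
      (a = some (.recv cm .mvL) ∧ r = withQueue ci co (ctrl (.HL t.head)) (tapeQueue t)) ∨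
      (a = some (.recv cm .mvR) ∧ r = withQueue ci co (ctrl (.HR t.head)) (tapeQueue t)) := by
  rw [tapeCfg, step_withQueue]
  constructor
  · rintro (⟨c', hc, -, rfl⟩ | ⟨c', v, -, hc, -⟩ | ⟨c', q', v, -, hc, -⟩)
    · rcases step_ctrl_H.1 hc with ⟨rfl, rfl⟩ | ⟨e, rfl, rfl⟩ | ⟨rfl, rfl⟩ | ⟨rfl, rfl⟩
      exacts [.inl ⟨rfl, rfl⟩, .inr (.inl ⟨e, rfl, rfl⟩), .inr (.inr (.inl ⟨rfl, rfl⟩)),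
        .inr (.inr (.inr ⟨rfl, rfl⟩))]
    all_goals rcases step_ctrl_H.1 hc with ⟨h, -⟩ | ⟨_, h, -⟩ | ⟨h, -⟩ | ⟨h, -⟩ <;> simp_all
  · rintro (⟨rfl, rfl⟩ | ⟨e, rfl, rfl⟩ | ⟨rfl, rfl⟩ | ⟨rfl, rfl⟩) <;>
      refine .inl ⟨_, step_ctrl_H.2 ?_, by simp_all, rfl⟩
    exacts [.inl ⟨rfl, rfl⟩, .inr (.inl ⟨e, rfl, rfl⟩), .inr (.inr (.inl ⟨rfl, rfl⟩)),
      .inr (.inr (.inr ⟨rfl, rfl⟩))]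

lemma TapeRel.term_iff {p : PExp C (Sym D) B (Tape D)}
    {q : PExp C (Sym D) B (TName D ⊕ List (Sym D))} (h : TapeRel ci co p q) :
    Term (infTapeSpec C B D cr cw cm) p ↔ Term 𝔼 q := by
  obtain ⟨t, rfl, rfl⟩ := h
  simp [term_tape, tapeCfg, withQueue, term_ctrl, term_queue]

lemma TapeRel.fwd (hr : cr ∉ ({ci, co} : Set C)) (hw : cw ∉ ({ci, co} : Set C))
    (hm : cm ∉ ({ci, co} : Set C)) {p p' : PExp C (Sym D) B (Tape D)}
    {q : PExp C (Sym D) B (TName D ⊕ List (Sym D))} (h : TapeRel ci co p q)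
    (hp : Step (infTapeSpec C B D cr cw cm) p a p') :
    ∃ q₀ q', Step 𝔼 q a q₀ ∧ (q₀ ⟶τ* q') ∧ TapeRel ci co p' q' := by
  obtain ⟨t, rfl, rfl⟩ := h
  rcases step_tape.1 hp with ⟨rfl, rfl⟩ | ⟨e, rfl, rfl⟩ | ⟨rfl, rfl⟩ | ⟨rfl, rfl⟩
  · exact ⟨_, _, (step_tapeCfg hr hw hm).2 (.inl ⟨rfl, rfl⟩), .refl, t, rfl, rfl⟩
  · exact ⟨_, _, (step_tapeCfg hr hw hm).2 (.inr (.inl ⟨e, rfl, rfl⟩)), .refl, _, rfl, rfl⟩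
  · exact ⟨_, _, (step_tapeCfg hr hw hm).2 (.inr (.inr (.inl ⟨rfl, rfl⟩))),
      detTauSteps_moveLeft t, _, rfl, rfl⟩
  · exact ⟨_, _, (step_tapeCfg hr hw hm).2 (.inr (.inr (.inr ⟨rfl, rfl⟩))),
      detTauSteps_moveRight t, _, rfl, rfl⟩

lemma TapeRel.bwd (hr : cr ∉ ({ci, co} : Set C)) (hw : cw ∉ ({ci, co} : Set C))
    (hm : cm ∉ ({ci, co} : Set C)) {p : PExp C (Sym D) B (Tape D)}
    {q q₀ : PExp C (Sym D) B (TName D ⊕ List (Sym D))} (h : TapeRel ci co p q)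
    (hq : Step 𝔼 q a q₀) :
    ∃ p' q', Step (infTapeSpec C B D cr cw cm) p a p' ∧ (q₀ ⟶τ* q') ∧ TapeRel ci co p' q' := by
  obtain ⟨t, rfl, rfl⟩ := h
  rcases (step_tapeCfg hr hw hm).1 hq with ⟨rfl, rfl⟩ | ⟨e, rfl, rfl⟩ | ⟨rfl, rfl⟩ | ⟨rfl, rfl⟩
  · exact ⟨_, _, step_tape.2 (.inl ⟨rfl, rfl⟩), .refl, t, rfl, rfl⟩
  · exact ⟨_, _, step_tape.2 (.inr (.inl ⟨e, rfl, rfl⟩)), .refl, _, rfl, rfl⟩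
  · exact ⟨_, _, step_tape.2 (.inr (.inr (.inl ⟨rfl, rfl⟩))), detTauSteps_moveLeft t, _, rfl,
      rfl⟩
  · exact ⟨_, _, step_tape.2 (.inr (.inr (.inr ⟨rfl, rfl⟩))), detTauSteps_moveRight t, _, rfl,
      rfl⟩

end Controller

/-- For every tape instance `δL ď δR`, the infinite tape
specification is divergence-preserving branching bisimilar to the tape
controller composed with the (infinite) queue holding `δR ⊥ δL`. -/
theorem tape_spec_dpbbisim_controller_with_queue
    {C D B : Type} [Fintype D] [DecidableEq D] (ci co cr cw cm : C)
    (hdist : List.Pairwise (· ≠ ·) [ci, co, cr, cw, cm])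
    (d : Option D) (δL δR : List (Option D)) :
    DPBranchingBisimilar
      (pLTS (infTapeSpec C B D cr cw cm) (.name (⟨δL.reverse, d, δR⟩ : Tape D)))
      (pLTS (EdTQ C D B ci co cr cw cm)
        (.par {ci, co} (.name (.inl (.H d)))
          (.name (.inr (dmap δR ++ [Sym.bot] ++ dmap δL))))) := by
  simp only [List.pairwise_cons, List.mem_cons, List.not_mem_nil, or_false, forall_eq_or_imp,
    forall_eq, List.Pairwise.nil] at hdist
  obtain ⟨⟨-, hir, hiw, him⟩, ⟨hor, how, hom⟩, -⟩ := hdist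
  have hr : cr ∉ ({ci, co} : Set C) := by simp [hir.symm, hor.symm]
  have hw : cw ∉ ({ci, co} : Set C) := by simp [hiw.symm, how.symm]
  have hm : cm ∉ ({ci, co} : Set C) := by simp [him.symm, hom.symm]
  refine dpBranchingBisimilar_pLTS_of_detTauSteps (TapeRel ci co)
    (fun _ _ _ h => h.not_step_none) (fun _ _ h => h.term_iff)
    (fun _ _ _ _ h => h.fwd hr hw hm) (fun _ _ _ _ h => h.bwd hr hw hm) ⟨_, rfl, ?_⟩
  simp [tapeCfg, withQueue, tapeQueue, ctrl, queue, dmap]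

end RTMPaper
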